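/- Define w_c(y) := φ(y+c)² φ(y−c) / (φ(y+c) + φ(y−c))³ for c > 0. Then for all 0 < c < τ, the integral ∫_ℝ w_c(y) · y · φ(y−τ) dy is strictly positive, and for all 0 < τ < c it is strictly negative; it vanishes when τ = c. -/

import Mathlib

open Real MeasureTheory

/-!
Pair the integrand `h(y) = w_c(y) y φ(y - τ)` with its reflection `h(-y)`. Because `φ` is even,
`h(y) + h(-y)` is `y` times a positive factor times `φ(y + c) φ(y - τ) - φ(y - c) φ(y + τ)`, and
comparing the exponents `(y + c)² + (y - τ)²` and `(y - c)² + (y + τ)²` shows that for `y > 0` this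
difference has the sign of `τ - c`. Hence `2 ∫ h = ∫ (h(y) + h(-y)) dy` has the sign of `τ - c`.
-/

/-- The standard normal density. -/
noncomputable def gaussPdf (x : ℝ) : ℝ :=
  (Real.sqrt (2 * Real.pi))⁻¹ * Real.exp (-(x ^ 2) / 2)

/-- ρ(a) = ∫ (1/(exp(2ay)+1))² φ(y−a) dy. -/
noncomputable def ρ (a : ℝ) : ℝ :=
  ∫ y : ℝ, (1 / (Real.exp (2 * a * y) + 1)) ^ 2 * gaussPdf (y - a)

/-- w_c(y) = φ(y+c)²φ(y−c)/(φ(y+c)+φ(y−c))³. -/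
noncomputable def w (c y : ℝ) : ℝ :=
  gaussPdf (y + c) ^ 2 * gaussPdf (y - c) / (gaussPdf (y + c) + gaussPdf (y - c)) ^ 3

lemma gaussPdf_pos (x : ℝ) : 0 < gaussPdf x := by
  unfold gaussPdf
  have := pi_pos
  positivity

@[fun_prop]
lemma continuous_gaussPdf : Continuous gaussPdf := by
  unfold gaussPdf
  fun_prop

lemma gaussPdf_neg (x : ℝ) : gaussPdf (-x) = gaussPdf x := by
  simp [gaussPdf]

lemma gaussPdf_mul_gaussPdf_lt {a b a' b' : ℝ} (h : a' ^ 2 + b' ^ 2 < a ^ 2 + b ^ 2) :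
    gaussPdf a * gaussPdf b < gaussPdf a' * gaussPdf b' := by
  unfold gaussPdf
  rw [mul_mul_mul_comm, mul_mul_mul_comm _ (exp _), ← exp_add, ← exp_add]
  have := pi_pos
  exact mul_lt_mul_of_pos_left (exp_lt_exp.2 (by linarith)) (by positivity)

lemma gaussPdf_sub_mul_gaussPdf_add_lt {c τ y : ℝ} (hcτ : c < τ) (hy : 0 < y) :
    gaussPdf (y - c) * gaussPdf (y + τ) < gaussPdf (y + c) * gaussPdf (y - τ) :=
  gaussPdf_mul_gaussPdf_lt (by nlinarith)

lemma integrable_gaussPdf : Integrable gaussPdf := by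
  refine ((integrable_exp_neg_mul_sq (by norm_num : (0 : ℝ) < 1 / 2)).const_mul
    (√(2 * π))⁻¹).congr (Filter.Eventually.of_forall fun x => ?_)
  simp only [gaussPdf]
  ring_nf

lemma integrable_mul_gaussPdf : Integrable fun x : ℝ => x * gaussPdf x := by
  refine ((integrable_mul_exp_neg_mul_sq (by norm_num : (0 : ℝ) < 1 / 2)).const_mul
    (√(2 * π))⁻¹).congr (Filter.Eventually.of_forall fun x => ?_)
  simp only [gaussPdf]
  ring_nf

lemma integrable_mul_gaussPdf_sub (τ : ℝ) : Integrable fun y : ℝ => y * gaussPdf (y - τ) := by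
  have h : Integrable fun x : ℝ => (x + τ) * gaussPdf x :=
    (integrable_mul_gaussPdf.add (integrable_gaussPdf.const_mul τ)).congr
      (Filter.Eventually.of_forall fun x => by simp only [Pi.add_apply]; ring)
  simpa using h.comp_sub_right τ

lemma integral_pos_of_add_comp_neg_pos {f : ℝ → ℝ} (hf : Integrable f)
    (hpos : ∀ y, 0 < y → 0 < f y + f (-y)) : 0 < ∫ y, f y := by
  set g : ℝ → ℝ := fun y => f y + f (-y)
  have hg_ne : ∀ y, y ≠ 0 → 0 < g y := by
    intro y hy
    rcases hy.lt_or_gt with hy | hy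
    · simpa [g, add_comm] using hpos (-y) (neg_pos.2 hy)
    · exact hpos y hy
  have hg_nonneg : 0 ≤ᵐ[volume] g := by
    filter_upwards [Measure.ae_ne volume 0] with y hy using (hg_ne y hy).le
  have hg_int : Integrable g := hf.add hf.comp_neg
  have hg_pos : 0 < ∫ y, g y := by
    rw [integral_pos_iff_support_of_nonneg_ae hg_nonneg hg_int]
    calc (0 : ENNReal) < volume (Set.Ioi (0 : ℝ)) := by simp
      _ ≤ volume (Function.support g) :=
        measure_mono fun y hy => (hg_ne y (ne_of_gt hy)).ne'
  have : ∫ y, g y = 2 * ∫ y, f y := by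
    rw [integral_add hf hf.comp_neg, integral_neg_eq_self f]
    ring
  linarith

lemma integral_eq_zero_of_odd {f : ℝ → ℝ} (hodd : ∀ y, f (-y) = -f y) : ∫ y, f y = 0 := by
  have := integral_neg_eq_self f volume
  simp_rw [hodd, integral_neg] at this
  linarith

lemma w_nonneg (c y : ℝ) : 0 ≤ w c y := by
  unfold w
  have := gaussPdf_pos (y + c)
  have := gaussPdf_pos (y - c)
  positivity

lemma w_le_one (c y : ℝ) : w c y ≤ 1 := by
  unfold w
  have hp := gaussPdf_pos (y + c)
  have hm := gaussPdf_pos (y - c)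
  rw [div_le_one (by positivity), pow_succ]
  exact mul_le_mul (pow_le_pow_left₀ hp.le (by linarith) 2) (by linarith) hm.le (sq_nonneg _)

lemma continuous_w (c : ℝ) : Continuous (w c) := by
  unfold w
  refine Continuous.div (by fun_prop) (by fun_prop) fun y => ?_
  have := gaussPdf_pos (y + c)
  have := gaussPdf_pos (y - c)
  positivity

lemma integrable_w_mul (c τ : ℝ) :
    Integrable fun y : ℝ => w c y * (y * gaussPdf (y - τ)) := by
  refine (integrable_mul_gaussPdf_sub τ).mono
    ((continuous_w c).mul (by fun_prop)).aestronglyMeasurable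
    (Filter.Eventually.of_forall fun y => ?_)
  rw [norm_mul, Real.norm_of_nonneg (w_nonneg c y)]
  exact mul_le_of_le_one_left (norm_nonneg _) (w_le_one c y)

lemma w_mul_add_w_neg_mul (c τ y : ℝ) :
    w c y * (y * gaussPdf (y - τ)) + w c (-y) * (-y * gaussPdf (-y - τ)) =
      y * (gaussPdf (y + c) * gaussPdf (y - c) / (gaussPdf (y + c) + gaussPdf (y - c)) ^ 3) *
        (gaussPdf (y + c) * gaussPdf (y - τ) - gaussPdf (y - c) * gaussPdf (y + τ)) := by
  unfold w
  rw [show -y + c = -(y - c) by ring, show -y - c = -(y + c) by ring,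
    show -y - τ = -(y + τ) by ring, gaussPdf_neg, gaussPdf_neg, gaussPdf_neg,
    add_comm (gaussPdf (y - c))]
  ring

lemma integral_w_mul_pos {c τ : ℝ} (hcτ : c < τ) :
    0 < ∫ y : ℝ, w c y * (y * gaussPdf (y - τ)) := by
  refine integral_pos_of_add_comp_neg_pos (integrable_w_mul c τ) fun y hy => ?_
  have := gaussPdf_pos (y + c)
  have := gaussPdf_pos (y - c)
  rw [w_mul_add_w_neg_mul]
  exact mul_pos (by positivity) (sub_pos.2 (gaussPdf_sub_mul_gaussPdf_add_lt hcτ hy))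

lemma integral_w_mul_neg {c τ : ℝ} (hτc : τ < c) :
    (∫ y : ℝ, w c y * (y * gaussPdf (y - τ))) < 0 := by
  rw [← neg_pos, ← integral_neg]
  refine integral_pos_of_add_comp_neg_pos (integrable_w_mul c τ).neg fun y hy => ?_
  have := gaussPdf_pos (y + c)
  have := gaussPdf_pos (y - c)
  have hlt := gaussPdf_sub_mul_gaussPdf_add_lt hτc hy
  rw [mul_comm (gaussPdf (y - τ)), mul_comm (gaussPdf (y + τ))] at hlt
  rw [← neg_add, w_mul_add_w_neg_mul, neg_pos]
  exact mul_neg_of_pos_of_neg (by positivity) (sub_neg.2 hlt)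

lemma integral_w_mul_self_eq_zero (c : ℝ) :
    ∫ y : ℝ, w c y * (y * gaussPdf (y - c)) = 0 :=
  integral_eq_zero_of_odd fun y => by
    linarith [w_mul_add_w_neg_mul c c y, mul_comm (gaussPdf (y + c)) (gaussPdf (y - c))]

/-- ∫ w_c(y)·y·φ(y−τ) dy is strictly positive for 0 < c < τ, strictly negative for
0 < τ < c, and vanishes when τ = c. -/
theorem stmt_19 :
    (∀ c τ : ℝ, 0 < c → c < τ → 0 < ∫ y : ℝ, w c y * (y * gaussPdf (y - τ))) ∧
    (∀ c τ : ℝ, 0 < τ → τ < c → (∫ y : ℝ, w c y * (y * gaussPdf (y - τ))) < 0) ∧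
    (∀ c : ℝ, 0 < c → (∫ y : ℝ, w c y * (y * gaussPdf (y - c))) = 0) :=
  ⟨fun _ _ _ hcτ => integral_w_mul_pos hcτ, fun _ _ _ hτc => integral_w_mul_neg hτc,
    fun c _ => integral_w_mul_self_eq_zero c⟩
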